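/- Let ħ > 0, let V : ℝ³ → ℝ be smooth and time-independent, and let η : ℝ³ × I → ℝ be a smooth strictly positive function on an open time interval I satisfying the backward heat equation with potential V: ħ ∂η/∂t = −(ħ²/2) Δη + V η. Define B := ħ ∇ log η and the energy function h := (1/2)|B|² + (ħ/2) ∇·B − V. Then (∂/∂t + B·∇ + (ħ/2)Δ) h = 0; that is, h(X(t),t) is a martingale (first integral) of the associated diffusion. -/

import Mathlib

/-!
With `L = log η`, the Hopf–Cole substitution turns the backward heat equation into
`ħ ∂ₜL = -(ħ²/2)(|∇L|² + ΔL) + V`, while `B = ħ∇L` gives `h = (ħ²/2)(|∇L|² + ΔL) - V`;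
together, `h = -ħ ∂ₜL` on `I`. Differentiating the explicit formula in time (`V` does not depend
on `t`, and `∂ₜ` commutes with `∂ᵢ` because `η` is smooth) gives
`∂ₜh = ħ² ∇L·∇∂ₜL + (ħ²/2) Δ∂ₜL`, whereas `h = -ħ ∂ₜL` gives
`B·∇h + (ħ/2)Δh = -ħ² ∇L·∇∂ₜL - (ħ²/2) Δ∂ₜL`.
-/
open MeasureTheory Real Set

noncomputable section

/-- Time partial derivative of a function of space `x ∈ ℝ³` and time `t`. -/
def pt (f : (Fin 3 → ℝ) → ℝ → ℝ) (x : Fin 3 → ℝ) (t : ℝ) : ℝ := deriv (f x) t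

/-- Spatial partial derivative `∂/∂x_i` of a function of space and time. -/
def pd (i : Fin 3) (f : (Fin 3 → ℝ) → ℝ → ℝ) (x : Fin 3 → ℝ) (t : ℝ) : ℝ :=
  deriv (fun s => f (Function.update x i s) t) (x i)

/-- Spatial Laplacian `Δ = Σᵢ ∂²/∂x_i²` of a function of space and time. -/
def lap (f : (Fin 3 → ℝ) → ℝ → ℝ) (x : Fin 3 → ℝ) (t : ℝ) : ℝ := ∑ i, pd i (pd i f) x t

/-- Spatial partial derivative `∂/∂x_i` of a function of space only. -/
def pds (i : Fin 3) (f : (Fin 3 → ℝ) → ℝ) (x : Fin 3 → ℝ) : ℝ :=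
  deriv (fun s => f (Function.update x i s)) (x i)

open Function (uncurry update)
open scoped ContDiff

section DirectionalDerivative

variable {E G : Type*} [NormedAddCommGroup E] [NormedSpace ℝ E]
  [NormedAddCommGroup G] [NormedSpace ℝ G] {U : Set E} {F : E → G}

theorem ContDiffOn.fderiv_apply_of_isOpen (hU : IsOpen U) (hF : ContDiffOn ℝ ∞ F U) (v : E) :
    ContDiffOn ℝ ∞ (fun p => fderiv ℝ F p v) U :=
  (hF.fderiv_of_isOpen hU le_rfl).clm_apply contDiffOn_const

theorem fderiv_fderiv_apply_comm (hU : IsOpen U) (hF : ContDiffOn ℝ ∞ F U) {p : E} (hp : p ∈ U)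
    (v w : E) :
    fderiv ℝ (fun q => fderiv ℝ F q v) p w = fderiv ℝ (fun q => fderiv ℝ F q w) p v := by
  have hFp : ContDiffAt ℝ ∞ F p := hF.contDiffAt (hU.mem_nhds hp)
  have hF' : DifferentiableAt ℝ (fderiv ℝ F) p :=
    (hFp.fderiv_right (m := ∞) le_rfl).differentiableAt (by simp)
  rw [fderiv_clm_apply hF' (differentiableAt_const v),
    fderiv_clm_apply hF' (differentiableAt_const w)]
  simpa using (hFp.isSymmSndFDerivAt (by simpa using ENat.LEInfty.out)).eq w v

end DirectionalDerivative

section SpaceTime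

variable {I : Set ℝ} {f g : (Fin 3 → ℝ) → ℝ → ℝ} {x : Fin 3 → ℝ} {t : ℝ}

theorem pd_congr (i : Fin 3) (hfg : ∀ y, f y t = g y t) : pd i f x t = pd i g x t := by
  simp only [pd, hfg]

theorem pd_const_mul (i : Fin 3) (c : ℝ) :
    pd i (fun y s => c * f y s) x t = c * pd i f x t :=
  deriv_const_mul_field c

variable (hI : IsOpen I) (hf : ContDiffOn ℝ ∞ (uncurry f) (univ ×ˢ I))
include hI hf

theorem differentiableAt_uncurry (ht : t ∈ I) : DifferentiableAt ℝ (uncurry f) (x, t) :=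
  (hf.contDiffAt ((isOpen_univ.prod hI).mem_nhds ⟨mem_univ x, ht⟩)).differentiableAt (by simp)

theorem hasDerivAt_time_slice (ht : t ∈ I) :
    HasDerivAt (f x) (fderiv ℝ (uncurry f) (x, t) (0, 1)) t :=
  (differentiableAt_uncurry hI hf ht).hasFDerivAt.comp_hasDerivAt t
    ((hasDerivAt_const t x).prodMk (hasDerivAt_id t))

theorem hasDerivAt_space_slice (ht : t ∈ I) (i : Fin 3) :
    HasDerivAt (fun s => f (update x i s) t)
      (fderiv ℝ (uncurry f) (x, t) (Pi.single i 1, 0)) (x i) := by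
  have hft : HasFDerivAt (uncurry f) (fderiv ℝ (uncurry f) (x, t)) (update x i (x i), t) := by
    rw [Function.update_eq_self]
    exact (differentiableAt_uncurry hI hf ht).hasFDerivAt
  exact hft.comp_hasDerivAt (x i)
    ((hasDerivAt_update x i (x i)).prodMk (hasDerivAt_const (x i) t))

theorem pt_eq_fderiv (ht : t ∈ I) : pt f x t = fderiv ℝ (uncurry f) (x, t) (0, 1) :=
  (hasDerivAt_time_slice hI hf ht).deriv

theorem pd_eq_fderiv (ht : t ∈ I) (i : Fin 3) :
    pd i f x t = fderiv ℝ (uncurry f) (x, t) (Pi.single i 1, 0) :=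
  (hasDerivAt_space_slice hI hf ht i).deriv

theorem hasDerivAt_pt (ht : t ∈ I) : HasDerivAt (f x) (pt f x t) t :=
  pt_eq_fderiv hI hf ht ▸ hasDerivAt_time_slice hI hf ht

theorem hasDerivAt_pd (ht : t ∈ I) (i : Fin 3) :
    HasDerivAt (fun s => f (update x i s) t) (pd i f x t) (x i) :=
  pd_eq_fderiv hI hf ht i ▸ hasDerivAt_space_slice hI hf ht i

theorem contDiffOn_pt : ContDiffOn ℝ ∞ (uncurry (pt f)) (univ ×ˢ I) :=
  (hf.fderiv_apply_of_isOpen (isOpen_univ.prod hI) (0, 1)).congr fun _ hp =>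
    pt_eq_fderiv hI hf hp.2

theorem contDiffOn_pd (i : Fin 3) : ContDiffOn ℝ ∞ (uncurry (pd i f)) (univ ×ˢ I) :=
  (hf.fderiv_apply_of_isOpen (isOpen_univ.prod hI) (Pi.single i 1, 0)).congr fun _ hp =>
    pd_eq_fderiv hI hf hp.2 i

theorem pt_pd_comm (ht : t ∈ I) (i : Fin 3) : pt (pd i f) x t = pd i (pt f) x t := by
  have hxt : univ ×ˢ I ∈ nhds (x, t) := (isOpen_univ.prod hI).mem_nhds ⟨mem_univ x, ht⟩
  have hpd :
      uncurry (pd i f) =ᶠ[nhds (x, t)] fun q => fderiv ℝ (uncurry f) q (Pi.single i 1, 0) :=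
    Filter.eventually_of_mem hxt fun q hq => pd_eq_fderiv hI hf hq.2 i
  have hpt : uncurry (pt f) =ᶠ[nhds (x, t)] fun q => fderiv ℝ (uncurry f) q (0, 1) :=
    Filter.eventually_of_mem hxt fun q hq => pt_eq_fderiv hI hf hq.2
  rw [pt_eq_fderiv hI (contDiffOn_pd hI hf i) ht, pd_eq_fderiv hI (contDiffOn_pt hI hf) ht i,
    hpd.fderiv_eq, hpt.fderiv_eq]
  exact fderiv_fderiv_apply_comm (isOpen_univ.prod hI) hf ⟨mem_univ x, ht⟩ _ _

theorem pt_pd_pd_comm (ht : t ∈ I) (i : Fin 3) :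
    pt (pd i (pd i f)) x t = pd i (pd i (pt f)) x t := by
  rw [pt_pd_comm hI (contDiffOn_pd hI hf i) ht i]
  exact pd_congr i fun y => pt_pd_comm hI hf ht i

end SpaceTime

section LogTransform

variable {I : Set ℝ} {η : (Fin 3 → ℝ) → ℝ → ℝ} {x : Fin 3 → ℝ} {t : ℝ}
  (hI : IsOpen I) (hη : ContDiffOn ℝ ∞ (uncurry η) (univ ×ˢ I))
include hI hη

theorem pt_log (ht : t ∈ I) (hx : η x t ≠ 0) :
    pt (fun y s => log (η y s)) x t = pt η x t / η x t :=
  ((hasDerivAt_pt hI hη ht).log hx).deriv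

theorem pd_log (ht : t ∈ I) (hx : η x t ≠ 0) (i : Fin 3) :
    pd i (fun y s => log (η y s)) x t = pd i η x t / η x t := by
  have hd := (hasDerivAt_pd hI hη ht i).log (by rwa [Function.update_eq_self])
  rw [Function.update_eq_self] at hd
  exact hd.deriv

theorem pd_pd_log (ht : t ∈ I) (hne : ∀ y, η y t ≠ 0) (i : Fin 3) :
    pd i (pd i fun y s => log (η y s)) x t
      = pd i (pd i η) x t / η x t - (pd i η x t / η x t) ^ 2 := by
  rw [pd_congr (g := fun y s => pd i η y s / η y s) i fun y => pd_log hI hη ht (hne y) i]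
  have hd := (hasDerivAt_pd hI (contDiffOn_pd hI hη i) ht i).fun_div (hasDerivAt_pd hI hη ht i)
    (by rw [Function.update_eq_self]; exact hne x)
  rw [Function.update_eq_self] at hd
  rw [pd, hd.deriv]
  field_simp

theorem sum_pd_pd_log_add_sum_sq (ht : t ∈ I) (hne : ∀ y, η y t ≠ 0) :
    ∑ i, pd i (pd i fun y s => log (η y s)) x t + ∑ i, pd i (fun y s => log (η y s)) x t ^ 2
      = lap η x t / η x t := by
  simp only [pd_pd_log hI hη ht hne, pd_log hI hη ht (hne x), lap, Fin.sum_univ_three]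
  ring

theorem hbar_mul_pt_log_of_backward_heat {hbar v : ℝ} (ht : t ∈ I) (hne : ∀ y, η y t ≠ 0)
    (hPDE : hbar * pt η x t = -(hbar ^ 2 / 2) * lap η x t + v * η x t) :
    hbar * pt (fun y s => log (η y s)) x t
      = -(hbar ^ 2 / 2) * (∑ i, pd i (fun y s => log (η y s)) x t ^ 2
          + ∑ i, pd i (pd i fun y s => log (η y s)) x t) + v := by
  rw [add_comm (∑ i, _ ^ 2), sum_pd_pd_log_add_sum_sq hI hη ht hne, pt_log hI hη ht (hne x)]
  have hx := hne x
  field_simp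
  linear_combination 2 * hPDE

end LogTransform

section Energy

variable {I : Set ℝ} {L h : (Fin 3 → ℝ) → ℝ → ℝ} {V : (Fin 3 → ℝ) → ℝ} {hbar : ℝ}
  {x : Fin 3 → ℝ} {t : ℝ}

theorem energy_eq_of_drift_eq {B : (Fin 3 → ℝ) → ℝ → Fin 3 → ℝ}
    (hB : ∀ x t i, B x t i = hbar * pd i L x t)
    (hh : ∀ x t, h x t =
      (1 / 2) * (∑ i, (B x t i) ^ 2)
        + (hbar / 2) * (∑ i, pd i (fun y s => B y s i) x t) - V x) (y : Fin 3 → ℝ) (s : ℝ) :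
    h y s = hbar ^ 2 / 2 * (∑ i, pd i L y s ^ 2 + ∑ i, pd i (pd i L) y s) - V y := by
  have hdiv : ∀ i, pd i (fun y s => B y s i) y s = hbar * pd i (pd i L) y s := fun i =>
    (pd_congr (g := fun y s => hbar * pd i L y s) i fun z => hB z s i).trans (pd_const_mul i hbar)
  rw [hh]
  simp only [hdiv]
  simp only [hB, Fin.sum_univ_three]
  ring

variable (hI : IsOpen I) (hL : ContDiffOn ℝ ∞ (uncurry L) (univ ×ˢ I))
  (hhL : ∀ y s, h y s = hbar ^ 2 / 2 * (∑ i, pd i L y s ^ 2 + ∑ i, pd i (pd i L) y s) - V y)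
include hI hL hhL

theorem pt_energy (ht : t ∈ I) :
    pt h x t = ∑ i, (hbar ^ 2 * pd i L x t * pd i (pt L) x t
      + hbar ^ 2 / 2 * pd i (pd i (pt L)) x t) := by
  have hd : HasDerivAt
      (fun s => hbar ^ 2 / 2 * (∑ i, pd i L x s ^ 2 + ∑ i, pd i (pd i L) x s) - V x) _ t :=
    (((HasDerivAt.fun_sum fun i _ => (hasDerivAt_pt hI (contDiffOn_pd hI hL i) ht).fun_pow 2).add
      (HasDerivAt.fun_sum fun i _ =>
        hasDerivAt_pt hI (contDiffOn_pd hI (contDiffOn_pd hI hL i) i) ht)).const_mul _).sub_const _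
  rw [pt, show h x = _ from funext (hhL x), hd.deriv]
  simp only [pt_pd_comm hI hL ht, pt_pd_pd_comm hI hL ht, Fin.sum_univ_three]
  ring

theorem generator_energy_eq_zero (ht : t ∈ I) (hht : ∀ y, h y t = -hbar * pt L y t) :
    pt h x t + ∑ i, hbar * pd i L x t * pd i h x t + hbar / 2 * lap h x t = 0 := by
  have hpd : ∀ y i, pd i h y t = -hbar * pd i (pt L) y t := fun y i =>
    (pd_congr i hht).trans (pd_const_mul i (-hbar))
  have hpdpd : ∀ i, pd i (pd i h) x t = -hbar * pd i (pd i (pt L)) x t := fun i =>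
    (pd_congr i fun y => hpd y i).trans (pd_const_mul i (-hbar))
  simp only [pt_energy hI hL hhL ht, lap, hpd, hpdpd, Fin.sum_univ_three]
  ring

end Energy

theorem energy_function_is_martingale_general
    (hbar : ℝ)
    (V : (Fin 3 → ℝ) → ℝ)
    (I : Set ℝ) (hI : IsOpen I)
    (η : (Fin 3 → ℝ) → ℝ → ℝ)
    (hsmooth : ContDiffOn ℝ (⊤ : ℕ∞) (fun p : (Fin 3 → ℝ) × ℝ => η p.1 p.2) (univ ×ˢ I))
    (hpos : ∀ x, ∀ t ∈ I, 0 < η x t)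
    (hPDE : ∀ x, ∀ t ∈ I,
      hbar * pt η x t = -(hbar ^ 2 / 2) * lap η x t + V x * η x t)
    (B : (Fin 3 → ℝ) → ℝ → Fin 3 → ℝ)
    (hB : ∀ x t i, B x t i = hbar * pd i (fun y s => Real.log (η y s)) x t)
    (h : (Fin 3 → ℝ) → ℝ → ℝ)
    (hh : ∀ x t, h x t =
      (1 / 2) * (∑ i, (B x t i) ^ 2)
        + (hbar / 2) * (∑ i, pd i (fun y s => B y s i) x t) - V x) :
    ∀ x, ∀ t ∈ I,
      pt h x t + (∑ i, B x t i * pd i h x t) + (hbar / 2) * lap h x t = 0 := by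
  intro x t ht
  have hne : ∀ y, η y t ≠ 0 := fun y => (hpos y t ht).ne'
  have hlog : ContDiffOn ℝ ∞ (uncurry fun y s => log (η y s)) (univ ×ˢ I) :=
    hsmooth.log fun p hp => (hpos p.1 p.2 hp.2).ne'
  have hhL := energy_eq_of_drift_eq hB hh
  have hht : ∀ y, h y t = -hbar * pt (fun y s => log (η y s)) y t := fun y => by
    rw [hhL]
    linear_combination hbar_mul_pt_log_of_backward_heat hI hsmooth ht hne (hPDE y t ht)
  simp only [hB]
  exact generator_energy_eq_zero hI hlog hhL ht hht

/-- **The energy function is a martingale (first integral).**  For a time-independent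
potential `V` and a positive solution `η` of the backward heat equation
`ħ ∂η/∂t = −(ħ²/2)Δη + Vη`, with `B := ħ∇log η` and energy function
`h := (1/2)|B|² + (ħ/2)∇·B − V`, one has `(∂/∂t + B·∇ + (ħ/2)Δ) h = 0`. -/
theorem energy_function_is_martingale
    (hbar : ℝ) (hhbar : 0 < hbar)
    (V : (Fin 3 → ℝ) → ℝ) (hV : ContDiff ℝ (⊤ : ℕ∞) V)
    (I : Set ℝ) (hI : IsOpen I)
    (η : (Fin 3 → ℝ) → ℝ → ℝ)
    (hsmooth : ContDiffOn ℝ (⊤ : ℕ∞) (fun p : (Fin 3 → ℝ) × ℝ => η p.1 p.2) (univ ×ˢ I))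
    (hpos : ∀ x, ∀ t ∈ I, 0 < η x t)
    (hPDE : ∀ x, ∀ t ∈ I,
      hbar * pt η x t = -(hbar ^ 2 / 2) * lap η x t + V x * η x t)
    (B : (Fin 3 → ℝ) → ℝ → Fin 3 → ℝ)
    (hB : ∀ x t i, B x t i = hbar * pd i (fun y s => Real.log (η y s)) x t)
    (h : (Fin 3 → ℝ) → ℝ → ℝ)
    (hh : ∀ x t, h x t =
      (1 / 2) * (∑ i, (B x t i) ^ 2)
        + (hbar / 2) * (∑ i, pd i (fun y s => B y s i) x t) - V x) :
    ∀ x, ∀ t ∈ I,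
      pt h x t + (∑ i, B x t i * pd i h x t) + (hbar / 2) * lap h x t = 0 :=
  energy_function_is_martingale_general hbar V I hI η hsmooth hpos hPDE B hB h hh
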